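/- For every integer h ≥ 2 and every n > h, λ₂_max(K_{h+1} minor free, n+1) ≥ λ₂_max(K_h minor free, n) + 1. -/

import Mathlib

/-!
If `G` has no `K_h` minor, neither does the cone `G ∨ K₁` have a `K_{h+1}` minor: the apex lies
in at most one branch set, and the remaining `h` branch sets live in `G`. The Laplacian of the
cone on `n + 1` vertices is `[[L + I, -𝟙], [-𝟙ᵀ, n]]`, and a block elimination gives
`χ_cone(x) · (x - 1) = χ_L(x - 1) · x · (x - n - 1)`. So the cone's spectrum is obtained from
that of `L` by shifting every eigenvalue but one `0` up by `1` and adding `n + 1`; since the trace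
bound gives `λ₂(G) ≤ n`, this yields `λ₂(G ∨ K₁) = λ₂(G) + 1`.
-/

/-- The Fiedler value (second smallest eigenvalue, with multiplicity, of the Laplacian
matrix `D - A`) of a finite simple graph. -/
noncomputable def lambda2 {V : Type*} [Fintype V] [DecidableEq V] (G : SimpleGraph V) : ℝ :=
  letI := Classical.decRel G.Adj
  ((Finset.univ.val.map (SimpleGraph.posSemidef_lapMatrix ℝ G).1.eigenvalues).sort (· ≤ ·)).getD 1 0

/-- `H` is a minor of `G` (branch-set model): pairwise disjoint nonempty connected subsets
of `V(G)`, one for each vertex of `H`, with an edge of `G` between the branch sets of any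
two adjacent vertices of `H`. -/
def IsMinorOf {W V : Type*} (H : SimpleGraph W) (G : SimpleGraph V) : Prop :=
  ∃ B : W → Set V, (∀ i, (B i).Nonempty) ∧
    (∀ i, ((G.induce (B i)).Connected)) ∧
    (Pairwise fun i j => Disjoint (B i) (B j)) ∧
    ∀ ⦃i j⦄, H.Adj i j → ∃ u ∈ B i, ∃ v ∈ B j, G.Adj u v

/-- `G` has no `K_h` minor. -/
def KMinorFree {V : Type*} (G : SimpleGraph V) (h : ℕ) : Prop :=
  ¬ IsMinorOf (⊤ : SimpleGraph (Fin h)) G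

/-- `λ₂max(𝓒, n)`: the maximum Fiedler value of an `n`-vertex graph of the class `𝓒`. -/
noncomputable def lambda2Max (𝓒 : ∀ n, Set (SimpleGraph (Fin n))) (n : ℕ) : ℝ :=
  sSup {x : ℝ | ∃ G ∈ 𝓒 n, x = lambda2 G}

open Matrix Polynomial

namespace Multiset

variable {α : Type*} [LinearOrder α]

theorem getD_sort_cons_succ {a : α} {s : Multiset α} (h : ∀ b ∈ s, a ≤ b) (i : ℕ)
    (d : α) : ((a ::ₘ s).sort (· ≤ ·)).getD (i + 1) d = (s.sort (· ≤ ·)).getD i d := by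
  rw [sort_cons _ _ _ h]
  rfl

theorem getD_sort_zero_eq {a : α} {s : Multiset α} (ha : a ∈ s) (h : ∀ b ∈ s, a ≤ b)
    (d : α) : (s.sort (· ≤ ·)).getD 0 d = a := by
  rw [← cons_erase ha, sort_cons _ _ _ fun b hb => h b (mem_of_mem_erase hb)]
  rfl

end Multiset

namespace Matrix

variable {n R : Type*} [Fintype n] [DecidableEq n] [CommRing R]

theorem sum_charmatrix_apply (M : Matrix n n R) (i : n) :
    ∑ j, charmatrix M i j = X - C (∑ j, M i j) := by
  simp [charmatrix_apply, Finset.sum_sub_distrib, diagonal_apply]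

theorem charpoly_add_one (M : Matrix n n R) : (M + 1).charpoly = M.charpoly.comp (X - 1) := by
  have : charmatrix (M + 1) = (charmatrix M).map (compRingHom (X - 1)) := by
    ext i j
    by_cases h : i = j
    · subst h; simp; ring
    · simp [h]
  rw [charpoly, this, ← RingHom.mapMatrix_apply, ← RingHom.map_det]
  rfl

end Matrix

namespace SimpleGraph

section Spectrum

variable {V W : Type*} [Fintype V] [DecidableEq V] [Fintype W] [DecidableEq W]
  (G : SimpleGraph V) [DecidableRel G.Adj]

theorem sum_lapMatrix_apply (R : Type*) [Ring R] (v : V) : ∑ w, G.lapMatrix R v w = 0 := by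
  simpa [mulVec, dotProduct] using congrFun (G.lapMatrix_mulVec_const_eq_zero (R := R)) v

theorem lambda2_eq_getD_sort_roots :
    lambda2 G = ((G.lapMatrix ℝ).charpoly.roots.sort (· ≤ ·)).getD 1 0 := by
  have h := (posSemidef_lapMatrix ℝ G).1.roots_charpoly_eq_eigenvalues
  simp only [RCLike.ofReal_real_eq_id, Function.id_comp] at h
  rw [lambda2, h]
  congr!

theorem card_roots_charpoly_lapMatrix :
    Multiset.card (G.lapMatrix ℝ).charpoly.roots = Fintype.card V := by
  simp [(isHermitian_lapMatrix ℝ G).roots_charpoly_eq_eigenvalues]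

theorem sum_roots_charpoly_lapMatrix :
    (G.lapMatrix ℝ).charpoly.roots.sum = ∑ v, (G.degree v : ℝ) := by
  rw [← trace_eq_sum_roots_charpoly_of_splits (isHermitian_lapMatrix ℝ G).splits_charpoly,
    trace]
  simp [lapMatrix, degMatrix, adjMatrix]

theorem exists_roots_charpoly_lapMatrix_eq_zero_cons [Nonempty V] :
    ∃ r : Multiset ℝ, (G.lapMatrix ℝ).charpoly.roots = 0 ::ₘ r ∧ ∀ x ∈ r, 0 ≤ x := by
  have hzero : (0 : ℝ) ∈ (G.lapMatrix ℝ).charpoly.roots := by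
    rw [mem_roots (charpoly_monic _).ne_zero, IsRoot, eval_charpoly]
    simp [det_neg, det_lapMatrix_eq_zero]
  obtain ⟨r, hr⟩ := Multiset.exists_cons_of_mem hzero
  refine ⟨r, hr, fun x hx => ?_⟩
  have hL := posSemidef_lapMatrix ℝ G
  have hx' : x ∈ (G.lapMatrix ℝ).charpoly.roots := hr ▸ Multiset.mem_cons_of_mem hx
  rw [hL.1.roots_charpoly_eq_eigenvalues] at hx'
  obtain ⟨i, -, rfl⟩ := Multiset.mem_map.mp hx'
  exact hL.eigenvalues_nonneg i

theorem le_card_of_roots_charpoly_lapMatrix_eq_zero_cons {r : Multiset ℝ}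
    (hr : (G.lapMatrix ℝ).charpoly.roots = 0 ::ₘ r) (hV : 2 ≤ Fintype.card V) {t : ℝ}
    (ht : ∀ x ∈ r, t ≤ x) : t ≤ Fintype.card V := by
  -- The `|V| - 1` roots in `r` sum to the trace `∑ deg v ≤ |V| (|V| - 1)`.
  have hcard : Multiset.card r = Fintype.card V - 1 := by
    have := G.card_roots_charpoly_lapMatrix
    rw [hr, Multiset.card_cons] at this
    omega
  have hsum : r.sum ≤ Fintype.card V * (Fintype.card V - 1 : ℝ) := by
    have := G.sum_roots_charpoly_lapMatrix
    rw [hr, Multiset.sum_cons, zero_add] at this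
    rw [this]
    calc ∑ v, (G.degree v : ℝ) ≤ ∑ _v : V, (Fintype.card V - 1 : ℝ) := by
          gcongr with v
          rw [le_sub_iff_add_le]
          exact_mod_cast G.degree_lt_card_verts v
      _ = _ := by simp; ring
  have hmin := Multiset.card_nsmul_le_sum ht
  rw [hcard, nsmul_eq_mul, Nat.cast_sub (by omega), Nat.cast_one] at hmin
  have hV' : (2 : ℝ) ≤ Fintype.card V := by exact_mod_cast hV
  nlinarith

variable {G} {G' : SimpleGraph W}

theorem Iso.lapMatrix_eq_reindex [DecidableRel G'.Adj] (R : Type*)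
    [AddGroupWithOne R] (e : G ≃g G') : G'.lapMatrix R = (G.lapMatrix R).reindex e e := by
  ext i j
  obtain ⟨i, rfl⟩ := e.surjective i
  obtain ⟨j, rfl⟩ := e.surjective j
  by_cases h : i = j
  · subst h; simp [lapMatrix, degMatrix, e.degree_eq]
  · simp [lapMatrix, degMatrix, adjMatrix, h, e.map_adj_iff]

omit [DecidableRel G.Adj] in
theorem Iso.lambda2_eq (e : G ≃g G') : lambda2 G = lambda2 G' := by
  classical
  rw [lambda2_eq_getD_sort_roots, lambda2_eq_getD_sort_roots, e.lapMatrix_eq_reindex ℝ,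
    charpoly_reindex]

end Spectrum

section Cone

variable {V : Type*} (G : SimpleGraph V)

def cone : SimpleGraph (V ⊕ Fin 1) :=
  (G ⊕g ⊥) ⊔ completeBipartiteGraph V (Fin 1)

@[simp] theorem cone_adj_inl_inl {a b : V} : G.cone.Adj (.inl a) (.inl b) ↔ G.Adj a b := by
  simp [cone]

@[simp] theorem cone_adj_inl_inr {a : V} {x : Fin 1} : G.cone.Adj (.inl a) (.inr x) := by
  simp [cone]

@[simp] theorem cone_adj_inr_inl {x : Fin 1} {a : V} : G.cone.Adj (.inr x) (.inl a) := by
  simp [cone]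

@[simp] theorem not_cone_adj_inr_inr {x y : Fin 1} : ¬ G.cone.Adj (.inr x) (.inr y) := by
  simp [cone]

instance [DecidableRel G.Adj] : DecidableRel G.cone.Adj
  | .inl _, .inl _ => decidable_of_iff _ G.cone_adj_inl_inl.symm
  | .inl _, .inr _ => .isTrue G.cone_adj_inl_inr
  | .inr _, .inl _ => .isTrue G.cone_adj_inr_inl
  | .inr _, .inr _ => .isFalse G.not_cone_adj_inr_inr

def Embedding.coneInl : G ↪g G.cone :=
  ⟨Function.Embedding.inl, G.cone_adj_inl_inl⟩

variable [Fintype V] [DecidableEq V] [DecidableRel G.Adj]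

theorem lapMatrix_cone (R : Type*) [Ring R] :
    G.cone.lapMatrix R = fromBlocks (G.lapMatrix R + 1) (of fun _ _ => -1) (of fun _ _ => -1)
      (of fun _ _ => (Fintype.card V : R)) := by
  have degree_inl (v : V) : (G.cone.degree (.inl v) : R) = G.degree v + 1 := by
    rw [G.cone.degree_eq_sum_if_adj, G.degree_eq_sum_if_adj, Fintype.sum_sum_type]
    simp
  have degree_inr (x : Fin 1) : (G.cone.degree (.inr x) : R) = Fintype.card V := by
    rw [G.cone.degree_eq_sum_if_adj, Fintype.sum_sum_type]
    simp
  ext (i | i) (j | j)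
  · by_cases h : i = j
    · subst h; simp [lapMatrix, degMatrix, degree_inl]
    · simp [lapMatrix, degMatrix, adjMatrix, h]
  · simp [lapMatrix, degMatrix, adjMatrix]
  · simp [lapMatrix, degMatrix, adjMatrix]
  · simp [lapMatrix, degMatrix, Subsingleton.elim i j, degree_inr]

theorem charpoly_lapMatrix_cone (R : Type*) [CommRing R] :
    (G.cone.lapMatrix R).charpoly * (X - 1) =
      (G.lapMatrix R).charpoly.comp (X - 1) * (X * (X - C ((Fintype.card V : R) + 1))) := by
  -- Every row of `charmatrix (L + 1)` sums to `X - 1`, so right multiplication by `Q`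
  -- clears the upper right block.
  set Q : Matrix (V ⊕ Fin 1) (V ⊕ Fin 1) R[X] :=
    fromBlocks 1 (of fun _ _ => -1) 0 (of fun _ _ => X - 1)
  have hQ : Q.det = X - 1 := by simp [Q, det_fromBlocks_zero₂₁]
  have hprod : charmatrix (G.cone.lapMatrix R) * Q =
      fromBlocks (charmatrix (G.lapMatrix R + 1)) 0 (of fun _ _ => 1)
        (of fun _ _ => X * (X - C ((Fintype.card V : R) + 1))) := by
    rw [lapMatrix_cone, charmatrix_fromBlocks, fromBlocks_multiply]
    congr 1
    · simp
    · ext v x : 1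
      simp [mul_apply, sum_charmatrix_apply, Finset.sum_add_distrib, sum_lapMatrix_apply,
        one_apply]
    · ext; simp
    · ext x y : 1
      obtain rfl : x = 0 := Subsingleton.elim x 0
      obtain rfl : y = 0 := Subsingleton.elim y 0
      simp [mul_apply, charmatrix_apply_eq]
      ring
  conv_lhs => rw [charpoly, ← hQ, ← det_mul, hprod, det_fromBlocks_zero₁₂, det_fin_one]
  rw [← charpoly, charpoly_add_one]
  rfl

theorem roots_charpoly_lapMatrix_cone {r : Multiset ℝ}
    (hr : (G.lapMatrix ℝ).charpoly.roots = 0 ::ₘ r) :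
    (G.cone.lapMatrix ℝ).charpoly.roots =
      0 ::ₘ ((Fintype.card V : ℝ) + 1) ::ₘ r.map (· + 1) := by
  have hcomp : ((G.lapMatrix ℝ).charpoly.comp (X - C 1)).roots = 1 ::ₘ r.map (· + 1) := by
    have := roots_comp_C_mul_X_add_C (G.lapMatrix ℝ).charpoly 1 (-1) isUnit_one
    simp only [map_one, one_mul, map_neg, ← sub_eq_add_neg] at this
    simp [this, hr]
  have hapex : X * (X - C ((Fintype.card V : ℝ) + 1)) ≠ 0 :=
    mul_ne_zero X_ne_zero (X_sub_C_ne_zero _)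
  have h := congrArg roots (G.charpoly_lapMatrix_cone ℝ)
  rw [← C_1, roots_mul (mul_ne_zero (charpoly_monic _).ne_zero (X_sub_C_ne_zero 1)),
    roots_mul (mul_ne_zero ((charpoly_monic _).comp_X_sub_C 1).ne_zero hapex), roots_mul hapex,
    hcomp, roots_X_sub_C, roots_X_sub_C, roots_X] at h
  rw [← add_left_inj {1}, h]
  simp only [← Multiset.singleton_add]
  abel

theorem lambda2_cone (hV : 2 ≤ Fintype.card V) : lambda2 G.cone = lambda2 G + 1 := by
  have : Nonempty V := Fintype.card_pos_iff.mp (by omega)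
  obtain ⟨r, hroots, hr_nonneg⟩ := G.exists_roots_charpoly_lapMatrix_eq_zero_cons
  obtain ⟨t, htr, ht_min⟩ : ∃ t ∈ r, ∀ x ∈ r, t ≤ x := by
    have hr : r.toFinset.Nonempty := by
      have := G.card_roots_charpoly_lapMatrix
      rw [hroots, Multiset.card_cons] at this
      simpa [Multiset.toFinset_nonempty, ← Multiset.card_pos] using
        (by omega : 0 < Multiset.card r)
    simpa using r.toFinset.exists_min_image id hr
  have ht_le := G.le_card_of_roots_charpoly_lapMatrix_eq_zero_cons hroots hV ht_min
  have hG : lambda2 G = t := by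
    rw [lambda2_eq_getD_sort_roots, hroots, Multiset.getD_sort_cons_succ hr_nonneg,
      Multiset.getD_sort_zero_eq htr ht_min]
  rw [lambda2_eq_getD_sort_roots, G.roots_charpoly_lapMatrix_cone hroots, hG,
    Multiset.getD_sort_cons_succ, Multiset.getD_sort_zero_eq]
  · exact Multiset.mem_cons_of_mem (Multiset.mem_map_of_mem _ htr)
  all_goals
    simp only [Multiset.forall_mem_cons, Multiset.forall_mem_map_iff]
    exact ⟨by linarith, fun x hx => by linarith [ht_min x hx, hr_nonneg x hx]⟩

end Cone

end SimpleGraph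

section Minors

open SimpleGraph

variable {U W V V' : Type*} {H' : SimpleGraph U} {H : SimpleGraph W} {G : SimpleGraph V}
  {G' : SimpleGraph V'}

/-- A branch-set model of `H` in `G`: `IsMinorOf H G` is by definition `∃ B, IsMinorModel H G B`. -/
def IsMinorModel (H : SimpleGraph W) (G : SimpleGraph V) (B : W → Set V) : Prop :=
  (∀ i, (B i).Nonempty) ∧ (∀ i, (G.induce (B i)).Connected) ∧
    (Pairwise fun i j => Disjoint (B i) (B j)) ∧
    ∀ ⦃i j⦄, H.Adj i j → ∃ u ∈ B i, ∃ v ∈ B j, G.Adj u v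

theorem SimpleGraph.Embedding.connected_induce_preimage (f : G ↪g G') {s : Set V'}
    (hs : s ⊆ Set.range f) (h : (G'.induce s).Connected) : (G.induce (f ⁻¹' s)).Connected := by
  have hbij : Function.Bijective fun v : f ⁻¹' s => (⟨f v, v.2⟩ : s) := by
    refine ⟨fun a b hab => Subtype.ext (f.injective (congrArg Subtype.val hab)), ?_⟩
    rintro ⟨w, hw⟩
    obtain ⟨v, rfl⟩ := hs hw
    exact ⟨⟨v, hw⟩, rfl⟩
  let e : G.induce (f ⁻¹' s) ≃g G'.induce s := ⟨Equiv.ofBijective _ hbij, f.map_adj_iff⟩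
  exact e.connected_iff.mpr h

theorem IsMinorModel.comp_embedding {B : W → Set V} (hB : IsMinorModel H G B) (g : H' ↪g H) :
    IsMinorModel H' G (B ∘ g) :=
  ⟨fun _ => hB.1 _, fun _ => hB.2.1 _, fun _ _ hij => hB.2.2.1 (g.injective.ne hij),
    fun _ _ hij => hB.2.2.2 (g.map_adj_iff.mpr hij)⟩

theorem IsMinorModel.preimage {B : W → Set V'} (hB : IsMinorModel H G' B) (f : G ↪g G')
    (hf : ∀ i, B i ⊆ Set.range f) : IsMinorModel H G fun i => f ⁻¹' B i := by
  obtain ⟨hne, hconn, hdisj, hadj⟩ := hB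
  refine ⟨fun i => ?_, fun i => f.connected_induce_preimage (hf i) (hconn i),
    fun i j hij => (hdisj hij).preimage f, fun i j hij => ?_⟩
  · obtain ⟨x, hx⟩ := hne i
    obtain ⟨v, rfl⟩ := hf i hx
    exact ⟨v, hx⟩
  · obtain ⟨u, hu, v, hv, huv⟩ := hadj hij
    obtain ⟨u, rfl⟩ := hf i hu
    obtain ⟨v, rfl⟩ := hf j hv
    exact ⟨u, hu, v, hv, f.map_adj_iff.mp huv⟩

theorem KMinorFree.bot {h : ℕ} (hh : 2 ≤ h) : KMinorFree (⊥ : SimpleGraph V) h := by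
  rintro ⟨B, -, -, -, hadj⟩
  obtain ⟨u, -, v, -, huv⟩ := hadj (i := ⟨0, by omega⟩) (j := ⟨1, by omega⟩) (by simp)
  exact huv

theorem KMinorFree.of_iso {h : ℕ} (hG : KMinorFree G h) (e : G ≃g G') : KMinorFree G' h :=
  fun ⟨B, hB⟩ =>
    hG ⟨_, IsMinorModel.preimage hB e.toEmbedding fun _ => by simp [e.surjective.range_eq]⟩

theorem KMinorFree.cone {h : ℕ} (hG : KMinorFree G h) : KMinorFree G.cone (h + 1) := by
  rintro ⟨B, hB : IsMinorModel _ _ B⟩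
  -- The apex lies in at most one branch set; the `h` others then lie inside `G`.
  obtain ⟨i₀, hi₀⟩ : ∃ i₀ : Fin (h + 1), ∀ j, .inr 0 ∉ B (i₀.succAbove j) := by
    by_cases hapex : ∃ i, .inr 0 ∈ B i
    · obtain ⟨i₀, hi₀⟩ := hapex
      exact ⟨i₀, fun j hj => Set.disjoint_left.mp (hB.2.2.1 (i₀.succAbove_ne j)) hj hi₀⟩
    · exact ⟨0, fun j hj => hapex ⟨_, hj⟩⟩
  refine hG ⟨_, (hB.comp_embedding (Embedding.completeGraph i₀.succAboveEmb)).preimage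
    (Embedding.coneInl G) fun j => ?_⟩
  rintro (v | x) hx
  · exact ⟨v, rfl⟩
  · exact absurd (Subsingleton.elim x 0 ▸ hx) (hi₀ j)

end Minors

theorem lambda2Max_add_le {𝓒 𝓓 : ∀ n, Set (SimpleGraph (Fin n))} {n m : ℕ} {c : ℝ}
    (hne : (𝓒 n).Nonempty) (h : ∀ G ∈ 𝓒 n, ∃ G' ∈ 𝓓 m, lambda2 G + c ≤ lambda2 G') :
    lambda2Max 𝓒 n + c ≤ lambda2Max 𝓓 m := by
  have hbdd : BddAbove {x : ℝ | ∃ G ∈ 𝓓 m, x = lambda2 G} :=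
    ((Set.finite_range lambda2).subset (by rintro _ ⟨G, -, rfl⟩; exact ⟨G, rfl⟩)).bddAbove
  obtain ⟨G₀, hG₀⟩ := hne
  rw [← le_sub_iff_add_le]
  refine csSup_le ⟨_, G₀, hG₀, rfl⟩ ?_
  rintro _ ⟨G, hG, rfl⟩
  obtain ⟨G', hG', hle⟩ := h G hG
  rw [le_sub_iff_add_le]
  exact hle.trans (le_csSup hbdd ⟨G', hG', rfl⟩)

/-- Adding a universal vertex to an extremal `K_h`-minor-free graph:
`λ₂max(K_{h+1} minor free, n+1) ≥ λ₂max(K_h minor free, n) + 1` for `n > h ≥ 2`. -/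
theorem lambda2Max_KMinorFree_succ (h n : ℕ) (hh : 2 ≤ h) (hn : h < n) :
    lambda2Max (fun m => {G : SimpleGraph (Fin m) | KMinorFree G h}) n + 1 ≤
      lambda2Max (fun m => {G : SimpleGraph (Fin m) | KMinorFree G (h + 1)}) (n + 1) := by
  classical
  refine lambda2Max_add_le ⟨⊥, KMinorFree.bot hh⟩ fun G hG => ?_
  let e := SimpleGraph.Iso.map finSumFinEquiv G.cone
  refine ⟨_, hG.cone.of_iso e, ?_⟩
  rw [← e.lambda2_eq, G.lambda2_cone (by simp; omega)]
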